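/- arXiv:1611.02759 — 3 statements merged into one kernel-verified Lean document; each statement's English description precedes it below -/
import Mathlib

section
/- Let v : ℝ → ℝ be smooth and compactly supported and let q ≥ 1 be an integer. Then there exists a constant C_q > 0 such that for every k_F ≥ 0, ∫_{{k ∈ ℝ : |k| ≤ k_F}} ∫_{{l ∈ ℝ : |l| ≥ k_F}} |F[v](k − l)|^q dl dk ≤ C_q, i.e. the fluctuation integral in one dimension is bounded uniformly in the density. (This is estimate (B.3) of the appendix lemma for d = 1: lim_TD L^{-2} Σ_{k=1}^N Σ_{l=N+1}^∞ |F[v](p_k − p_l)|^q equals a constant independent of ρ.) -/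
open MeasureTheory Real Set Filter
open scoped FourierTransform


open MeasureTheory Real

/-- The one-dimensional Fourier transform `F[v](ξ) = ∫_ℝ v(x) e^{−i ξ x} dx`. -/
noncomputable def fourierTransform1 (v : ℝ → ℝ) (ξ : ℝ) : ℂ :=
  ∫ x : ℝ, Complex.exp (-(Complex.I * ((ξ * x : ℝ) : ℂ))) * (v x : ℂ)

lemma aux_setIntegral_comp_add (f : ℝ → ℝ) (k : ℝ) (s : Set ℝ) :
    ∫ x in (fun x => x + k) ⁻¹' s, f (x + k) = ∫ y in s, f y := by
  have A : MeasurableEmbedding fun x : ℝ => x + k :=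
    (Homeomorph.addRight k).isClosedEmbedding.measurableEmbedding
  have h := A.setIntegral_map (μ := volume) f s
  rw [map_add_right_eq_self (volume : Measure ℝ) k] at h
  exact h.symm

lemma aux_setIntegral_comp_sub (f : ℝ → ℝ) (k : ℝ) (s : Set ℝ) :
    ∫ x in (fun x => x - k) ⁻¹' s, f (x - k) = ∫ y in s, f y := by
  simpa [sub_eq_add_neg] using aux_setIntegral_comp_add f (-k) s

lemma aux_tail4 (d : ℝ) (hd : 0 ≤ d) :
    ∫ u in Ioi d, ((1+u)^4 : ℝ)⁻¹ = (3*(1+d)^3)⁻¹ := by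
  have hder : ∀ x ∈ Ici d, HasDerivAt (fun u : ℝ => -((3:ℝ)*(1+u)^3)⁻¹) ((1+x)^4)⁻¹ x := by
    intro x hx
    have hx0 : (0:ℝ) < 1 + x := by have := hx.out; linarith
    have h1 : HasDerivAt (fun u : ℝ => (3:ℝ)*(1+u)^3) (3*(((3:ℕ):ℝ)*(1+x)^2*1)) x :=
      (((hasDerivAt_id x).const_add 1).pow 3).const_mul 3
    have h2 := (h1.inv (by positivity)).neg
    refine h2.congr_deriv ?_
    field_simp
    ring_nf
  have hint : IntegrableOn (fun u : ℝ => ((1+u)^4)⁻¹) (Ioi d) := by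
    apply Integrable.mono' (g := fun u : ℝ => (1+u^2)⁻¹)
      (integrable_inv_one_add_sq.integrableOn)
    · exact (((measurable_const.add measurable_id).pow_const 4).inv).aestronglyMeasurable
    · rw [ae_restrict_iff' measurableSet_Ioi]
      refine ae_of_all _ fun x hx => ?_
      have hx0 : 0 ≤ x := le_of_lt (lt_of_le_of_lt hd hx)
      have h1 : (1:ℝ) + x^2 ≤ (1+x)^4 := by nlinarith
      have h2 : (0:ℝ) < 1 + x^2 := by positivity
      rw [Real.norm_eq_abs, abs_of_nonneg (by positivity)]
      exact inv_anti₀ h2 h1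
  have htend : Tendsto (fun u : ℝ => -((3:ℝ)*(1+u)^3)⁻¹) atTop (nhds 0) := by
    rw [show (0:ℝ) = -0 by ring]
    apply Tendsto.neg
    apply Tendsto.inv_tendsto_atTop
    apply Tendsto.const_mul_atTop (by norm_num : (0:ℝ) < 3)
    exact (tendsto_pow_atTop (by norm_num : (3:ℕ) ≠ 0)).comp
      (tendsto_atTop_add_const_left _ 1 tendsto_id)
  have := integral_Ioi_of_hasDerivAt_of_tendsto' (fun x hx => hder x hx) hint htend
  rw [this]
  ring


lemma aux_FT_eq (v : ℝ → ℝ) (ξ : ℝ) :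
    fourierTransform1 v ξ = 𝓕 (fun x : ℝ => (v x : ℂ)) (ξ / (2 * π)) := by
  rw [Real.fourier_real_eq_integral_exp_smul]
  unfold fourierTransform1
  congr 1 with x
  rw [smul_eq_mul]
  congr 1
  have hπ : (π : ℝ) ≠ 0 := Real.pi_ne_zero
  rw [show -2 * π * x * (ξ / (2 * π)) = -(ξ * x) by field_simp]
  push_cast
  ring_nf

lemma aux_FT_decay (v : ℝ → ℝ) (hv : ContDiff ℝ (⊤ : ℕ∞) v) (hsupp : HasCompactSupport v) :
    ∃ A : ℝ, 1 ≤ A ∧ ∀ ξ : ℝ, ‖fourierTransform1 v ξ‖ ≤ A * ((1+|ξ|)^4)⁻¹ := by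
  set f : ℝ → ℂ := fun x => (v x : ℂ) with hf_def
  have hf : ContDiff ℝ (⊤ : ℕ∞) f := Complex.ofRealCLM.contDiff.comp hv
  have hfs : HasCompactSupport f := hsupp.comp_left (g := Complex.ofReal) Complex.ofReal_zero
  have hint : ∀ n : ℕ, Integrable (iteratedDeriv n f) := by
    intro n
    have h1 : Integrable (iteratedFDeriv ℝ n f) :=
      (hf.continuous_iteratedFDeriv (by exact_mod_cast le_top)).integrable_of_hasCompactSupport
        (hfs.iteratedFDeriv n)
    rw [iteratedFDeriv_eq_equiv_comp] at h1
    exact (LinearIsometryEquiv.integrable_comp_iff _).1 h1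
  have key := Real.fourier_iteratedDeriv (N := (⊤ : ℕ∞)) (hf.of_le (by simp))
      (fun n _ => hint n) (le_top : ((4:ℕ) : ℕ∞) ≤ ⊤)
  set M₀ : ℝ := ∫ x : ℝ, ‖f x‖ with hM0
  set M₄ : ℝ := ∫ x : ℝ, ‖iteratedDeriv 4 f x‖ with hM4
  have hM0n : 0 ≤ M₀ := integral_nonneg fun x => norm_nonneg _
  have hM4n : 0 ≤ M₄ := integral_nonneg fun x => norm_nonneg _
  have bound0 : ∀ w : ℝ, ‖𝓕 f w‖ ≤ M₀ := fun w =>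
    VectorFourier.norm_fourierIntegral_le_integral_norm _ _ _ f w
  have bound4 : ∀ w : ℝ, (2*π*|w|)^4 * ‖𝓕 f w‖ ≤ M₄ := by
    intro w
    have h1 : ‖𝓕 (iteratedDeriv 4 f) w‖ ≤ M₄ :=
      VectorFourier.norm_fourierIntegral_le_integral_norm _ _ _ _ w
    rw [key] at h1
    have h2 : ‖(2 * ↑π * Complex.I * ↑w) ^ 4 • 𝓕 f w‖ = (2*π*|w|)^4 * ‖𝓕 f w‖ := by
      rw [norm_smul, norm_pow]
      congr 2
      simp [norm_mul, Complex.norm_real, Real.norm_eq_abs, abs_of_pos Real.pi_pos]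
    rw [h2] at h1
    exact h1
  refine ⟨8*(M₀+M₄)+1, by linarith, fun ξ => ?_⟩
  have hrel := aux_FT_eq v ξ
  have hw : 2*π*|ξ/(2*π)| = |ξ| := by
    rw [abs_div, abs_of_pos (by positivity : (0:ℝ) < 2*π)]
    field_simp
  have c0 : ‖fourierTransform1 v ξ‖ ≤ M₀ := by rw [hrel]; exact bound0 _
  have c4 : |ξ|^4 * ‖fourierTransform1 v ξ‖ ≤ M₄ := by
    rw [hrel, ← hw]; exact bound4 _
  have hx : (0:ℝ) ≤ |ξ| := abs_nonneg ξ
  have hcube : (1+|ξ|)^4 ≤ 8*(1+|ξ|^4) := by nlinarith [sq_nonneg (1-|ξ|), sq_nonneg (1+|ξ|), sq_nonneg (|ξ|^2-1), sq_nonneg (|ξ|^2-|ξ|), sq_nonneg |ξ|]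
  have hpos : (0:ℝ) < (1+|ξ|)^4 := by positivity
  rw [← div_eq_mul_inv, le_div_iff₀ hpos]
  calc ‖fourierTransform1 v ξ‖ * (1+|ξ|)^4
      ≤ ‖fourierTransform1 v ξ‖ * (8*(1+|ξ|^4)) := by
        apply mul_le_mul_of_nonneg_left hcube (norm_nonneg _)
    _ = 8 * ‖fourierTransform1 v ξ‖ + 8 * (|ξ|^4 * ‖fourierTransform1 v ξ‖) := by ring
    _ ≤ 8 * M₀ + 8 * M₄ := by
        apply add_le_add
        · exact mul_le_mul_of_nonneg_left c0 (by norm_num)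
        · exact mul_le_mul_of_nonneg_left c4 (by norm_num)
    _ ≤ 8*(M₀+M₄)+1 := by linarith
/-- Estimate (B.3) for `d = 1`: the fluctuation integral
`∫_{|k| ≤ k_F} ∫_{|l| ≥ k_F} |F[v](k−l)|^q dl dk` is bounded uniformly in the density. -/
theorem fluctuation_integral_bounded_one_dim
    (v : ℝ → ℝ) (hv : ContDiff ℝ (⊤ : ℕ∞) v) (hsupp : HasCompactSupport v)
    (q : ℕ) (hq : 1 ≤ q) :
    ∃ C : ℝ, 0 < C ∧ ∀ kF : ℝ, 0 ≤ kF →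
      (∫ k in {k : ℝ | |k| ≤ kF},
        ∫ l in {l : ℝ | kF ≤ |l|},
          ‖fourierTransform1 v (k - l)‖ ^ q) ≤ C := by
  obtain ⟨A, hA1, hA⟩ := aux_FT_decay v hv hsupp
  have hA0 : (0:ℝ) < A := lt_of_lt_of_le one_pos hA1
  -- the majorant G
  set G : ℝ → ℝ := fun t => A^q * ((1+|t|)^4)⁻¹ with hG_def
  have hG_nonneg : ∀ t, 0 ≤ G t := fun t => by positivity
  have hG_cont : Continuous G :=
    continuous_const.mul (((continuous_const.add continuous_abs).pow 4).inv₀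
      (fun x => by simp only [Pi.add_apply, Pi.pow_apply]; positivity))
  have hG_int : Integrable G := by
    apply Integrable.mono' (g := fun t : ℝ => A^q * (1+t^2)⁻¹)
      (integrable_inv_one_add_sq.const_mul _) hG_cont.aestronglyMeasurable
    refine ae_of_all _ fun t => ?_
    rw [Real.norm_eq_abs, abs_of_nonneg (hG_nonneg t)]
    have h1 : (1:ℝ) + t^2 ≤ (1+|t|)^4 := by nlinarith [abs_nonneg t, sq_abs t]
    have h2 : (0:ℝ) < 1 + t^2 := by positivity
    exact mul_le_mul_of_nonneg_left (inv_anti₀ h2 h1) (by positivity)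
  -- pointwise bound on the q-th power
  have hFTq : ∀ t : ℝ, ‖fourierTransform1 v t‖ ^ q ≤ G t := by
    intro t
    have h1 : ‖fourierTransform1 v t‖ ^ q ≤ (A * ((1+|t|)^4)⁻¹) ^ q :=
      pow_le_pow_left₀ (norm_nonneg _) (hA t) q
    have hb1 : ((1+|t|)^4 : ℝ)⁻¹ ≤ 1 := by
      rw [inv_le_one_iff₀]
      right
      exact one_le_pow₀ (by simp [abs_nonneg])
    have hb0 : (0:ℝ) ≤ ((1+|t|)^4 : ℝ)⁻¹ := by positivity
    calc ‖fourierTransform1 v t‖ ^ q ≤ (A * ((1+|t|)^4)⁻¹) ^ q := h1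
      _ = A^q * (((1+|t|)^4)⁻¹)^q := by rw [mul_pow]
      _ ≤ A^q * (((1+|t|)^4)⁻¹)^1 := by
          apply mul_le_mul_of_nonneg_left (pow_le_pow_of_le_one hb0 hb1 hq) (by positivity)
      _ = G t := by rw [pow_one]
  refine ⟨A^q * π, by positivity, fun kF hkF => ?_⟩
  -- fix kF ≥ 0
  have hSet : {k : ℝ | |k| ≤ kF} = Icc (-kF) kF := by ext x; simp [abs_le]
  have hSetL : {l : ℝ | kF ≤ |l|} = Iic (-kF) ∪ Ici kF := by
    ext x; simp [le_abs, le_neg, or_comm]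
  -- inner bound
  set H : ℝ → ℝ := fun k => A^q * ((1+(kF-k)^2)⁻¹ + (1+(kF+k)^2)⁻¹) with hH_def
  have inner_nonneg : ∀ k : ℝ, 0 ≤ ∫ l in {l : ℝ | kF ≤ |l|}, ‖fourierTransform1 v (k - l)‖ ^ q :=
    fun k => integral_nonneg fun l => by positivity
  have inner_bound : ∀ k ∈ Icc (-kF) kF,
      (∫ l in {l : ℝ | kF ≤ |l|}, ‖fourierTransform1 v (k - l)‖ ^ q) ≤ H k := by
    intro k hk
    obtain ⟨hk1, hk2⟩ := hk
    have hGk_int : Integrable (fun l : ℝ => G (k - l)) := hG_int.comp_sub_left k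
    -- step 1: bound by G
    have step1 : (∫ l in {l : ℝ | kF ≤ |l|}, ‖fourierTransform1 v (k - l)‖ ^ q)
        ≤ ∫ l in {l : ℝ | kF ≤ |l|}, G (k - l) := by
      apply integral_mono_of_nonneg (ae_of_all _ fun l => by positivity)
        hGk_int.integrableOn (ae_of_all _ fun l => hFTq _)
    -- step 2: split the set
    have step2 : (∫ l in {l : ℝ | kF ≤ |l|}, G (k - l))
        = (∫ l in Iic (-kF), G (k - l)) + ∫ l in Ici kF, G (k - l) := by
      rw [hSetL]
      apply integral_union_ae _ measurableSet_Ici.nullMeasurableSet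
        hGk_int.integrableOn hGk_int.integrableOn
      have : Iic (-kF) ∩ Ici kF ⊆ Icc kF (-kF) := by
        intro x hx; exact ⟨hx.2, hx.1⟩
      refine measure_mono_null this ?_
      rw [Real.volume_Icc]
      simp [ENNReal.ofReal_eq_zero]
      linarith
    -- piece on Ici kF
    have piece1 : (∫ l in Ici kF, G (k - l)) ≤ A^q * (1+(kF-k)^2)⁻¹ := by
      have e1 : (∫ l in Ici kF, G (k - l)) = ∫ l in Ici kF, G (l - k) := by
        apply setIntegral_congr_fun measurableSet_Ici
        intro l _
        simp only [hG_def]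
        rw [abs_sub_comm]
      have e2 : (fun x : ℝ => x - k) ⁻¹' (Ici (kF - k)) = Ici kF := by
        ext x
        simp only [Set.mem_preimage, Set.mem_Ici, Set.mem_Ioi]
        constructor <;> intro h <;> linarith
      have e3 : (∫ l in Ici kF, G (l - k)) = ∫ u in Ici (kF - k), G u := by
        have h := aux_setIntegral_comp_sub G k (Ici (kF - k))
        rw [e2] at h
        exact h
      have e4 : (∫ u in Ici (kF - k), G u) = A^q * ∫ u in Ioi (kF - k), ((1+u)^4 : ℝ)⁻¹ := by
        rw [integral_Ici_eq_integral_Ioi, ← integral_const_mul]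
        apply setIntegral_congr_fun measurableSet_Ioi
        intro u hu
        have : 0 ≤ u := le_trans (by linarith) (le_of_lt hu)
        simp only [hG_def, abs_of_nonneg this]
      rw [e1, e3, e4, aux_tail4 (kF - k) (by linarith)]
      apply mul_le_mul_of_nonneg_left _ (by positivity)
      apply inv_anti₀ (by positivity)
      nlinarith [sq_nonneg (kF - k)]
    -- piece on Iic (-kF)
    have piece2 : (∫ l in Iic (-kF), G (k - l)) ≤ A^q * (1+(kF+k)^2)⁻¹ := by
      have e1 : (∫ l in Iic (-kF), G (k - l)) = ∫ y in Ioi kF, G (k + y) := by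
        have h := integral_comp_neg_Iic (-kF) (fun y : ℝ => G (k + y))
        simp only [neg_neg] at h
        rw [← h]
        apply setIntegral_congr_fun measurableSet_Iic
        intro l _
        simp only [sub_eq_add_neg]
      have e2 : (fun x : ℝ => x + k) ⁻¹' (Ioi (kF + k)) = Ioi kF := by
        ext x
        simp only [Set.mem_preimage, Set.mem_Ici, Set.mem_Ioi]
        constructor <;> intro h <;> linarith
      have e3 : (∫ y in Ioi kF, G (k + y)) = ∫ u in Ioi (kF + k), G u := by
        have h := aux_setIntegral_comp_add G k (Ioi (kF + k))
        rw [e2] at h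
        rw [← h]
        exact setIntegral_congr_fun measurableSet_Ioi fun y _ => congrArg G (add_comm k y)
      have e4 : (∫ u in Ioi (kF + k), G u) = A^q * ∫ u in Ioi (kF + k), ((1+u)^4 : ℝ)⁻¹ := by
        rw [← integral_const_mul]
        apply setIntegral_congr_fun measurableSet_Ioi
        intro u hu
        have : 0 ≤ u := le_trans (by linarith) (le_of_lt hu)
        simp only [hG_def, abs_of_nonneg this]
      rw [e1, e3, e4, aux_tail4 (kF + k) (by linarith)]
      apply mul_le_mul_of_nonneg_left _ (by positivity)
      apply inv_anti₀ (by positivity)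
      nlinarith [sq_nonneg (kF + k)]
    calc (∫ l in {l : ℝ | kF ≤ |l|}, ‖fourierTransform1 v (k - l)‖ ^ q)
        ≤ (∫ l in Iic (-kF), G (k - l)) + ∫ l in Ici kF, G (k - l) := by
          rw [← step2]; exact step1
      _ ≤ A^q * (1+(kF+k)^2)⁻¹ + A^q * (1+(kF-k)^2)⁻¹ := add_le_add piece2 piece1
      _ = H k := by rw [hH_def]; ring
  -- outer integral
  have hH_cont : Continuous H := by
    apply continuous_const.mul
    apply Continuous.add
    · exact (continuous_const.add ((continuous_const.sub continuous_id).pow 2)).inv₀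
        (fun x => by simp only [Pi.add_apply, Pi.sub_apply, Pi.pow_apply, id_eq]; positivity)
    · exact (continuous_const.add ((continuous_const.add continuous_id).pow 2)).inv₀
        (fun x => by simp only [Pi.add_apply, Pi.sub_apply, Pi.pow_apply, id_eq]; positivity)
  have outer1 : (∫ k in {k : ℝ | |k| ≤ kF},
      ∫ l in {l : ℝ | kF ≤ |l|}, ‖fourierTransform1 v (k - l)‖ ^ q) ≤ ∫ k in Icc (-kF) kF, H k := by
    rw [hSet]
    apply integral_mono_of_nonneg (ae_of_all _ fun k => inner_nonneg k)
      (hH_cont.integrableOn_Icc)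
    exact (ae_restrict_iff' measurableSet_Icc).2 (ae_of_all _ inner_bound)
  -- compute the H integral
  have hf1_int : Integrable (fun k : ℝ => ((1+(kF-k)^2 : ℝ))⁻¹) := by
    have := integrable_inv_one_add_sq.comp_sub_left kF
    simpa using this
  have hf2_int : Integrable (fun k : ℝ => ((1+(kF+k)^2 : ℝ))⁻¹) := by
    have := integrable_inv_one_add_sq.comp_add_left kF
    simpa using this
  have term1 : (∫ k in Icc (-kF) kF, ((1+(kF-k)^2 : ℝ))⁻¹) ≤ π/2 := by
    have m1 : (∫ k in Icc (-kF) kF, ((1+(kF-k)^2 : ℝ))⁻¹)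
        ≤ ∫ k in Iic kF, ((1+(kF-k)^2 : ℝ))⁻¹ := by
      apply setIntegral_mono_set hf1_int.integrableOn
        (ae_of_all _ fun k => by positivity)
      exact HasSubset.Subset.eventuallyLE (fun x hx => hx.2)
    have m2 : (∫ k in Iic kF, ((1+(kF-k)^2 : ℝ))⁻¹)
        = ∫ y in Ioi (-kF), ((1+(kF+y)^2 : ℝ))⁻¹ := by
      have h := integral_comp_neg_Iic kF (fun y : ℝ => ((1+(kF+y)^2 : ℝ))⁻¹)
      rw [← h]
      apply setIntegral_congr_fun measurableSet_Iic
      intro l _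
      ring_nf
    have e2 : (fun x : ℝ => x + kF) ⁻¹' (Ioi (0:ℝ)) = Ioi (-kF) := by
      ext x
      simp only [Set.mem_preimage, Set.mem_Ici, Set.mem_Ioi]
      constructor <;> intro h <;> linarith
    have m3 : (∫ y in Ioi (-kF), ((1+(kF+y)^2 : ℝ))⁻¹)
        = ∫ u in Ioi (0:ℝ), ((1+u^2 : ℝ))⁻¹ := by
      have h := aux_setIntegral_comp_add (fun u : ℝ => ((1+u^2 : ℝ))⁻¹) kF (Ioi 0)
      rw [e2] at h
      rw [← h]
      apply setIntegral_congr_fun measurableSet_Ioi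
      intro y _
      ring_nf
    rw [m2, m3] at m1
    rw [integral_Ioi_inv_one_add_sq] at m1
    simpa using m1
  have term2 : (∫ k in Icc (-kF) kF, ((1+(kF+k)^2 : ℝ))⁻¹) ≤ π/2 := by
    have m1 : (∫ k in Icc (-kF) kF, ((1+(kF+k)^2 : ℝ))⁻¹)
        ≤ ∫ k in Ici (-kF), ((1+(kF+k)^2 : ℝ))⁻¹ := by
      apply setIntegral_mono_set hf2_int.integrableOn
        (ae_of_all _ fun k => by positivity)
      exact HasSubset.Subset.eventuallyLE (fun x hx => hx.1)
    have e2 : (fun x : ℝ => x + kF) ⁻¹' (Ioi (0:ℝ)) = Ioi (-kF) := by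
      ext x
      simp only [Set.mem_preimage, Set.mem_Ici, Set.mem_Ioi]
      constructor <;> intro h <;> linarith
    have m3 : (∫ k in Ici (-kF), ((1+(kF+k)^2 : ℝ))⁻¹)
        = ∫ u in Ioi (0:ℝ), ((1+u^2 : ℝ))⁻¹ := by
      rw [integral_Ici_eq_integral_Ioi]
      have h := aux_setIntegral_comp_add (fun u : ℝ => ((1+u^2 : ℝ))⁻¹) kF (Ioi 0)
      rw [e2] at h
      rw [← h]
      apply setIntegral_congr_fun measurableSet_Ioi
      intro y _
      ring_nf
    rw [m3] at m1
    rw [integral_Ioi_inv_one_add_sq] at m1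
    simpa using m1
  have outer2 : (∫ k in Icc (-kF) kF, H k) ≤ A^q * π := by
    have e : (∫ k in Icc (-kF) kF, H k)
        = A^q * ((∫ k in Icc (-kF) kF, ((1+(kF-k)^2 : ℝ))⁻¹)
          + ∫ k in Icc (-kF) kF, ((1+(kF+k)^2 : ℝ))⁻¹) := by
      rw [hH_def, ← integral_add hf1_int.integrableOn hf2_int.integrableOn,
        ← integral_const_mul]
    rw [e]
    have := add_le_add term1 term2
    calc A^q * ((∫ k in Icc (-kF) kF, ((1+(kF-k)^2 : ℝ))⁻¹)
          + ∫ k in Icc (-kF) kF, ((1+(kF+k)^2 : ℝ))⁻¹)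
        ≤ A^q * (π/2 + π/2) := mul_le_mul_of_nonneg_left this (by positivity)
      _ = A^q * π := by ring
  exact le_trans outer1 (le_trans outer2 (le_refl _))
end

section
/- Let v : ℝ → ℝ be smooth and compactly supported, let 0 < ε < 1/2, and let q ≥ 1 be an integer. Then there exists C_{q,ε} > 0 such that for every ρ ≥ 1, with k_F = πρ, ∫_{{k ∈ ℝ : |k| ≤ k_F}} ∫_{{l ∈ ℝ : |l| ≥ k_F, |k − l| ≥ ρ^ε}} |F[v](k − l)|^q dl dk ≤ C_{q,ε} · ρ^{−1/ε}. (This is estimate (B.4) of the appendix lemma for d = 1.) -/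
open MeasureTheory Real

open Set FourierTransform

set_option maxHeartbeats 1000000 in
/-- A smooth compactly supported real function, as a Schwartz function into `ℂ`. -/
noncomputable def mySchwartzAux (v : ℝ → ℝ) (hv : ContDiff ℝ (⊤ : ℕ∞) v)
    (hsupp : HasCompactSupport v) : SchwartzMap ℝ ℂ where
  toFun := fun x => (v x : ℂ)
  smooth' := Complex.ofRealCLM.contDiff.comp (hv.of_le (by simp))
  decay' := by
    intro k n
    have hvC : ContDiff ℝ (⊤ : ℕ∞) (fun x : ℝ => (v x : ℂ)) :=
      Complex.ofRealCLM.contDiff.comp (hv.of_le (by simp))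
    have hsuppC : HasCompactSupport (fun x : ℝ => (v x : ℂ)) :=
      HasCompactSupport.comp_left (g := fun r : ℝ => (r : ℂ)) hsupp (by simp)
    have hcont : Continuous fun x : ℝ =>
        ‖x‖ ^ k * ‖iteratedFDeriv ℝ n (fun x : ℝ => (v x : ℂ)) x‖ :=
      (continuous_norm.pow k).mul
        (((hvC.of_le (le_refl _)).continuous_iteratedFDeriv (by exact_mod_cast le_top))).norm
    have hcs : HasCompactSupport fun x : ℝ =>
        ‖x‖ ^ k * ‖iteratedFDeriv ℝ n (fun x : ℝ => (v x : ℂ)) x‖ :=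
      HasCompactSupport.mul_left ((hsuppC.iteratedFDeriv n).norm)
    obtain ⟨C, hC⟩ := hcont.bounded_above_of_compact_support hcs
    exact ⟨C, fun x => (Real.le_norm_self _).trans (hC x)⟩

lemma fourier_eq_aux (v : ℝ → ℝ) (hv : ContDiff ℝ (⊤ : ℕ∞) v) (hsupp : HasCompactSupport v) (ξ : ℝ) :
    fourierTransform1 v ξ =
      (SchwartzMap.fourierTransformCLM ℂ (mySchwartzAux v hv hsupp)) (ξ / (2 * π)) := by
  rw [SchwartzMap.fourierTransformCLM_apply, SchwartzMap.fourier_coe, Real.fourier_eq']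
  unfold fourierTransform1
  congr 1
  ext x
  rw [smul_eq_mul]
  simp only [RCLike.inner_apply, starRingEnd_apply, star_trivial]
  have : (-2 * π * (ξ / (2 * π) * x) : ℝ) = -(ξ * x) := by field_simp
  rw [this]
  congr 1
  push_cast
  ring_nf

lemma abs_rpow_integrableOn_aux {r R : ℝ} (hr : r < -1) (hR : 0 < R) :
    IntegrableOn (fun x : ℝ => |x| ^ r) {u : ℝ | R ≤ |u|} := by
  have hU : {u : ℝ | R ≤ |u|} = Iic (-R) ∪ Ici R := by
    ext u
    simp only [mem_setOf_eq, mem_union, mem_Iic, mem_Ici, le_abs, le_neg]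
    tauto
  have hIci : IntegrableOn (fun x : ℝ => |x| ^ r) (Ici R) := by
    rw [integrableOn_Ici_iff_integrableOn_Ioi]
    exact (integrableOn_Ioi_rpow_of_lt hr hR).congr_fun
      (fun x hx => by rw [abs_of_pos (hR.trans hx)]) measurableSet_Ioi
  have hIic : IntegrableOn (fun x : ℝ => |x| ^ r) (Iic (-R)) := by
    have hpre : Iic (-R) = Neg.neg ⁻¹' (Ici R) := by
      ext x; simp [le_neg]
    have h := ((Measure.measurePreserving_neg (volume : Measure ℝ)).integrableOn_comp_preimage
      (MeasurableEquiv.neg ℝ).measurableEmbedding).mpr hIci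
    rw [hpre]
    refine h.congr_fun (fun x _ => ?_) ((measurableSet_Ici).preimage measurable_neg)
    simp [Function.comp, abs_neg]
  rw [hU]
  exact hIic.union hIci

lemma abs_rpow_setIntegral_aux {r R : ℝ} (hr : r < -1) (hR : 0 < R) :
    ∫ x in {u : ℝ | R ≤ |u|}, |x| ^ r = 2 * (-R ^ (r + 1) / (r + 1)) := by
  have hU : {u : ℝ | R ≤ |u|} = Iic (-R) ∪ Ici R := by
    ext u
    simp only [mem_setOf_eq, mem_union, mem_Iic, mem_Ici, le_abs, le_neg]
    tauto
  have hIciv : ∫ x in Ici R, |x| ^ r = -R ^ (r + 1) / (r + 1) := by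
    rw [integral_Ici_eq_integral_Ioi,
      setIntegral_congr_fun measurableSet_Ioi
        (fun x hx => by simp only []; rw [abs_of_pos (hR.trans hx)] :
          EqOn (fun x : ℝ => |x| ^ r) (fun x : ℝ => x ^ r) (Ioi R)),
      integral_Ioi_rpow_of_lt hr hR]
  have hIci : IntegrableOn (fun x : ℝ => |x| ^ r) (Ici R) := by
    rw [integrableOn_Ici_iff_integrableOn_Ioi]
    exact (integrableOn_Ioi_rpow_of_lt hr hR).congr_fun
      (fun x hx => by rw [abs_of_pos (hR.trans hx)]) measurableSet_Ioi
  have hpre : Iic (-R) = Neg.neg ⁻¹' (Ici R) := by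
    ext x; simp [le_neg]
  have hIicv : ∫ x in Iic (-R), |x| ^ r = -R ^ (r + 1) / (r + 1) := by
    rw [hpre]
    rw [show (∫ x in Neg.neg ⁻¹' (Ici R), |x| ^ r) = ∫ x in Neg.neg ⁻¹' (Ici R), |(-x)| ^ r from
      setIntegral_congr_fun ((measurableSet_Ici).preimage measurable_neg)
        (fun x _ => by rw [abs_neg])]
    rw [(Measure.measurePreserving_neg (volume : Measure ℝ)).setIntegral_preimage_emb
      (MeasurableEquiv.neg ℝ).measurableEmbedding (fun x => |x| ^ r) (Ici R)]
    exact hIciv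
  have hIic : IntegrableOn (fun x : ℝ => |x| ^ r) (Iic (-R)) := by
    rw [hpre]
    refine (((Measure.measurePreserving_neg (volume : Measure ℝ)).integrableOn_comp_preimage
      (MeasurableEquiv.neg ℝ).measurableEmbedding).mpr hIci).congr_fun (fun x _ => ?_)
      ((measurableSet_Ici).preimage measurable_neg)
    simp [Function.comp, abs_neg]
  rw [hU, setIntegral_union (Iic_disjoint_Ici.mpr (by linarith)) measurableSet_Ici hIic hIci,
    hIicv, hIciv]
  ring

set_option maxHeartbeats 2000000 in
/-- Estimate (B.4) for `d = 1`: with `k_F = πρ`, contributions with momentum transfer at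
least `ρ^ε` satisfy
`∫_{|k| ≤ k_F} ∫_{|l| ≥ k_F, |k−l| ≥ ρ^ε} |F[v](k−l)|^q dl dk ≤ C_{q,ε} ρ^{−1/ε}`. -/
theorem large_momentum_transfer_bound_one_dim
    (v : ℝ → ℝ) (hv : ContDiff ℝ (⊤ : ℕ∞) v) (hsupp : HasCompactSupport v)
    (ε : ℝ) (hε0 : 0 < ε) (hε : ε < 1/2) (q : ℕ) (hq : 1 ≤ q) :
    ∃ C : ℝ, 0 < C ∧ ∀ ρ : ℝ, 1 ≤ ρ →
      (∫ k in {k : ℝ | |k| ≤ π * ρ},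
        ∫ l in {l : ℝ | π * ρ ≤ |l| ∧ ρ ^ ε ≤ |k - l|},
          ‖fourierTransform1 v (k - l)‖ ^ q) ≤ C * ρ ^ (-(1/ε)) := by
  classical
  set u : SchwartzMap ℝ ℂ := SchwartzMap.fourierTransformCLM ℂ (mySchwartzAux v hv hsupp) with hu
  set N : ℕ := max 2 ⌈(2 + 1/ε)/ε⌉₊ with hNdef
  obtain ⟨C, hCpos, hC⟩ := u.decay N 0
  set m : ℕ := N * q with hmdef
  have hNm : N ≤ m := Nat.le_mul_of_pos_right N (by omega)
  have hN2 : 2 ≤ N := le_max_left _ _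
  have hNge : (2 + 1/ε)/ε ≤ (N : ℝ) :=
    le_trans (Nat.le_ceil _) (Nat.cast_le.mpr (le_max_right _ _))
  have hm2 : (2:ℝ) ≤ (m:ℝ) := by exact_mod_cast le_trans hN2 hNm
  set r : ℝ := -(m : ℝ) with hrdef
  have hr : r < -1 := by rw [hrdef]; linarith
  set D : ℝ := (C * (2*π)^N) ^ q with hD
  have hCπ : 0 < C * (2*π)^N := by positivity
  have hDpos : 0 < D := pow_pos hCπ q
  have point : ∀ ξ : ℝ, 1 ≤ |ξ| → ‖fourierTransform1 v ξ‖ ^ q ≤ D * |ξ| ^ r := by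
    intro ξ hξ
    have hξ0 : (0:ℝ) < |ξ| := lt_of_lt_of_le one_pos hξ
    have h1 := hC (ξ / (2*π))
    rw [norm_iteratedFDeriv_zero] at h1
    have hnorm : ‖ξ / (2*π)‖ = |ξ| / (2*π) := by
      rw [Real.norm_eq_abs, abs_div, abs_of_pos Real.two_pi_pos]
    rw [hnorm, div_pow] at h1
    have hup : ‖u (ξ / (2*π))‖ ≤ C * (2*π)^N / |ξ|^N := by
      rw [le_div_iff₀ (pow_pos hξ0 N)]
      rw [div_mul_eq_mul_div, div_le_iff₀ (by positivity)] at h1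
      nlinarith [h1]
    have h2 : ‖fourierTransform1 v ξ‖ ^ q ≤ (C * (2*π)^N / |ξ|^N) ^ q := by
      rw [fourier_eq_aux v hv hsupp ξ]
      exact pow_le_pow_left₀ (norm_nonneg _) hup q
    refine h2.trans (le_of_eq ?_)
    rw [div_pow, ← pow_mul, ← hmdef, hrdef, Real.rpow_neg (abs_nonneg ξ),
      Real.rpow_natCast, div_eq_mul_inv]
  refine ⟨4 * π * D, by positivity, ?_⟩
  intro ρ hρ
  have hρ0 : (0:ℝ) < ρ := lt_of_lt_of_le one_pos hρ
  set R : ℝ := ρ ^ ε with hRdef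
  have hR1 : 1 ≤ R := by
    rw [hRdef]
    calc (1:ℝ) = 1 ^ ε := (Real.one_rpow ε).symm
      _ ≤ ρ ^ ε := Real.rpow_le_rpow zero_le_one hρ hε0.le
  have hRpos : (0:ℝ) < R := lt_of_lt_of_le one_pos hR1
  -- inner bound
  have inner_bound : ∀ k : ℝ,
      (∫ l in {l : ℝ | π * ρ ≤ |l| ∧ R ≤ |k - l|}, ‖fourierTransform1 v (k - l)‖ ^ q)
        ≤ D * (2 * (-R ^ (r + 1) / (r + 1))) := by
    intro k
    have hφmp : MeasurePreserving (fun l : ℝ => k - l) volume volume :=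
      Measure.measurePreserving_sub_left volume k
    have hφemb : MeasurableEmbedding (fun l : ℝ => k - l) :=
      (MeasurableEquiv.subLeft k).measurableEmbedding
    have hpre : {l : ℝ | R ≤ |k - l|} = (fun l : ℝ => k - l) ⁻¹' {u : ℝ | R ≤ |u|} := rfl
    have hS'meas : MeasurableSet {l : ℝ | R ≤ |k - l|} :=
      measurableSet_le measurable_const ((measurable_const.sub measurable_id).abs)
    have hSmeas : MeasurableSet {l : ℝ | π * ρ ≤ |l| ∧ R ≤ |k - l|} := by
      rw [Set.setOf_and]
      exact (measurableSet_le measurable_const measurable_abs).inter hS'meas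
    have hsub : {l : ℝ | π * ρ ≤ |l| ∧ R ≤ |k - l|} ⊆ {l : ℝ | R ≤ |k - l|} :=
      fun l hl => hl.2
    have hint' : IntegrableOn (fun l : ℝ => |k - l| ^ r) {l : ℝ | R ≤ |k - l|} := by
      rw [hpre]
      exact (hφmp.integrableOn_comp_preimage hφemb).mpr (abs_rpow_integrableOn_aux hr hRpos)
    have step1 : (∫ l in {l : ℝ | π * ρ ≤ |l| ∧ R ≤ |k - l|},
        ‖fourierTransform1 v (k - l)‖ ^ q)
        ≤ ∫ l in {l : ℝ | π * ρ ≤ |l| ∧ R ≤ |k - l|}, D * |k - l| ^ r := by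
      refine integral_mono_of_nonneg (Filter.Eventually.of_forall fun l => by positivity)
        ((hint'.mono_set hsub).const_mul D) ?_
      refine (ae_restrict_iff' hSmeas).mpr (Filter.Eventually.of_forall fun l hl => ?_)
      exact point (k - l) (le_trans hR1 hl.2)
    have step2 : (∫ l in {l : ℝ | π * ρ ≤ |l| ∧ R ≤ |k - l|}, D * |k - l| ^ r)
        = D * ∫ l in {l : ℝ | π * ρ ≤ |l| ∧ R ≤ |k - l|}, |k - l| ^ r :=
      integral_const_mul D _
    have step3 : (∫ l in {l : ℝ | π * ρ ≤ |l| ∧ R ≤ |k - l|}, |k - l| ^ r)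
        ≤ ∫ l in {l : ℝ | R ≤ |k - l|}, |k - l| ^ r :=
      setIntegral_mono_set hint'
        (Filter.Eventually.of_forall fun l => by positivity)
        (HasSubset.Subset.eventuallyLE hsub)
    have step4 : (∫ l in {l : ℝ | R ≤ |k - l|}, |k - l| ^ r)
        = ∫ x in {u : ℝ | R ≤ |u|}, |x| ^ r := by
      rw [hpre]
      exact hφmp.setIntegral_preimage_emb hφemb (fun x => |x| ^ r) {u : ℝ | R ≤ |u|}
    calc (∫ l in {l : ℝ | π * ρ ≤ |l| ∧ R ≤ |k - l|}, ‖fourierTransform1 v (k - l)‖ ^ q)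
        ≤ ∫ l in {l : ℝ | π * ρ ≤ |l| ∧ R ≤ |k - l|}, D * |k - l| ^ r := step1
      _ = D * ∫ l in {l : ℝ | π * ρ ≤ |l| ∧ R ≤ |k - l|}, |k - l| ^ r := step2
      _ ≤ D * ∫ l in {l : ℝ | R ≤ |k - l|}, |k - l| ^ r := by
          exact mul_le_mul_of_nonneg_left step3 hDpos.le
      _ = D * ∫ x in {u : ℝ | R ≤ |u|}, |x| ^ r := by rw [step4]
      _ = D * (2 * (-R ^ (r + 1) / (r + 1))) := by
          rw [abs_rpow_setIntegral_aux hr hRpos]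
  -- outer bound
  have hKset : {k : ℝ | |k| ≤ π * ρ} = Icc (-(π*ρ)) (π*ρ) := by
    ext k; simp [abs_le]
  have hKvol : volume {k : ℝ | |k| ≤ π * ρ} < ⊤ := by
    rw [hKset]; exact measure_Icc_lt_top
  have hKmeas : MeasurableSet {k : ℝ | |k| ≤ π * ρ} := by
    rw [hKset]; exact measurableSet_Icc
  set B : ℝ := D * (2 * (-R ^ (r + 1) / (r + 1))) with hB
  have houter : ‖∫ k in {k : ℝ | |k| ≤ π * ρ},
      ∫ l in {l : ℝ | π * ρ ≤ |l| ∧ R ≤ |k - l|}, ‖fourierTransform1 v (k - l)‖ ^ q‖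
      ≤ B * (volume {k : ℝ | |k| ≤ π * ρ}).toReal := by
    refine norm_setIntegral_le_of_norm_le_const_ae' hKvol
      (Filter.Eventually.of_forall fun k _ => ?_)
    have hnn : 0 ≤ ∫ l in {l : ℝ | π * ρ ≤ |l| ∧ R ≤ |k - l|},
        ‖fourierTransform1 v (k - l)‖ ^ q :=
      integral_nonneg fun l => by positivity
    rw [Real.norm_eq_abs, abs_of_nonneg hnn]
    exact inner_bound k
  have hvolval : (volume {k : ℝ | |k| ≤ π * ρ}).toReal = 2 * (π * ρ) := by
    rw [hKset, Real.volume_Icc, ENNReal.toReal_ofReal (by nlinarith [Real.pi_pos] : (0:ℝ) ≤ π * ρ - -(π * ρ))]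
    ring
  have hrm1 : -(r + 1) = (m:ℝ) - 1 := by rw [hrdef]; ring
  have hBle : B ≤ 2 * D * R ^ (r + 1) := by
    have h1 : -R ^ (r + 1) / (r + 1) = R ^ (r + 1) / (-(r + 1)) := by
      rw [div_neg, neg_div]
    have hkey : -R ^ (r + 1) / (r + 1) ≤ R ^ (r + 1) := by
      rw [h1]
      exact div_le_self (Real.rpow_nonneg hRpos.le _) (by rw [hrm1]; linarith)
    rw [hB]
    nlinarith [hkey, Real.rpow_nonneg hRpos.le (r + 1), hDpos.le]
  have hfinal : (∫ k in {k : ℝ | |k| ≤ π * ρ},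
      ∫ l in {l : ℝ | π * ρ ≤ |l| ∧ R ≤ |k - l|}, ‖fourierTransform1 v (k - l)‖ ^ q)
      ≤ 4 * π * D * (ρ * R ^ (r + 1)) := by
    calc (∫ k in {k : ℝ | |k| ≤ π * ρ},
        ∫ l in {l : ℝ | π * ρ ≤ |l| ∧ R ≤ |k - l|}, ‖fourierTransform1 v (k - l)‖ ^ q)
        ≤ ‖∫ k in {k : ℝ | |k| ≤ π * ρ},
            ∫ l in {l : ℝ | π * ρ ≤ |l| ∧ R ≤ |k - l|}, ‖fourierTransform1 v (k - l)‖ ^ q‖ :=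
          le_abs_self _
      _ ≤ B * (volume {k : ℝ | |k| ≤ π * ρ}).toReal := houter
      _ = B * (2 * (π * ρ)) := by rw [hvolval]
      _ ≤ (2 * D * R ^ (r + 1)) * (2 * (π * ρ)) := by
          have : (0:ℝ) ≤ 2 * (π * ρ) := by positivity
          exact mul_le_mul_of_nonneg_right hBle this
      _ = 4 * π * D * (ρ * R ^ (r + 1)) := by ring
  have hexp : ρ * R ^ (r + 1) ≤ ρ ^ (-(1/ε)) := by
    have hRe : R ^ (r + 1) = ρ ^ (ε * (r + 1)) := by
      rw [hRdef, ← Real.rpow_mul hρ0.le]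
    have hmul : ρ * R ^ (r + 1) = ρ ^ (1 + ε * (r + 1)) := by
      rw [hRe, Real.rpow_add hρ0, Real.rpow_one]
    rw [hmul]
    apply Real.rpow_le_rpow_of_exponent_le hρ
    have hεN : 2 + 1/ε ≤ ε * (N:ℝ) := by
      rw [div_le_iff₀ hε0] at hNge
      linarith [hNge]
    have hNmr : (N:ℝ) ≤ (m:ℝ) := by exact_mod_cast hNm
    have hεm : 2 + 1/ε ≤ ε * (m:ℝ) := le_trans hεN (by nlinarith)
    have h1ε : 0 < 1/ε := by positivity
    rw [hrdef]
    nlinarith [hεm, hε0, hε]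
  calc (∫ k in {k : ℝ | |k| ≤ π * ρ},
      ∫ l in {l : ℝ | π * ρ ≤ |l| ∧ R ≤ |k - l|}, ‖fourierTransform1 v (k - l)‖ ^ q)
      ≤ 4 * π * D * (ρ * R ^ (r + 1)) := hfinal
    _ ≤ 4 * π * D * ρ ^ (-(1/ε)) := by
        exact mul_le_mul_of_nonneg_left hexp (by positivity)
end

section
/- There exists a universal constant C > 0 such that for every k_F ≥ 1, every R with 1 ≤ R ≤ k_F, and all real numbers 0 ≤ a < b ≤ 1, the Lebesgue measure of the set {(k,l) ∈ ℝ³ × ℝ³ : |k| ≤ k_F, |l| ≥ k_F, |k − l| < R, a ≤ |l| − |k| < b} is at most C · k_F² · R² · b · (b − a). (This is the three-dimensional shell-volume estimate used in Appendix C, which with R = ρ^ε, a = ρ^{−b_n}, b = ρ^{−b_{n+1}} and k_F ∝ ρ^{1/3} gives lim_TD L^{−6} Σ_{(k,l)∈𝔖_n} ≲ ρ^{2/3 − b_{n+1}} ρ^{2ε} (ρ^{−b_{n+1}} − ρ^{−b_n}).) -/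
open MeasureTheory Real

namespace ShellVolAux

/-- volume of a Euclidean ball in dimension 3 -/
lemma vol_ball3 (r : ℝ) (hr : 0 ≤ r) :
    volume (Metric.ball (0 : EuclideanSpace ℝ (Fin 3)) r) = ENNReal.ofReal (r ^ 3 * (4 * π / 3)) := by
  rw [EuclideanSpace.volume_ball]
  simp only [Fintype.card_fin]
  have hG : Real.Gamma ((3:ℕ) / 2 + 1) = 3 / 4 * Real.sqrt π := by
    push_cast
    rw [show (3:ℝ)/2 + 1 = 3/2 + 1 from rfl, Real.Gamma_add_one (by norm_num),
      show (3:ℝ)/2 = 1/2 + 1 by norm_num, Real.Gamma_add_one (by norm_num), Real.Gamma_one_half_eq]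
    ring
  rw [hG]
  have hs : Real.sqrt π ^ 3 / (3 / 4 * Real.sqrt π) = 4 * π / 3 := by
    have h1 : Real.sqrt π ^ 2 = π := Real.sq_sqrt pi_pos.le
    have h2 : Real.sqrt π ≠ 0 := ne_of_gt (Real.sqrt_pos.2 pi_pos)
    field_simp
    nlinarith [h1, Real.sqrt_nonneg π]
  rw [hs, ← ENNReal.ofReal_pow hr, ← ENNReal.ofReal_mul (by positivity)]

lemma vol_closedBall3 (r : ℝ) (hr : 0 ≤ r) :
    volume (Metric.closedBall (0 : EuclideanSpace ℝ (Fin 3)) r)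
      = ENNReal.ofReal (r ^ 3 * (4 * π / 3)) := by
  rw [Measure.addHaar_closedBall_eq_addHaar_ball]
  exact vol_ball3 r hr

/-- volume of a closed annulus in dimension 3 -/
lemma annulus_vol (r₁ r₂ : ℝ) (h₁ : 0 ≤ r₁) :
    volume {l : EuclideanSpace ℝ (Fin 3) | r₁ ≤ ‖l‖ ∧ ‖l‖ ≤ r₂} ≤
      ENNReal.ofReal ((r₂ ^ 3 - r₁ ^ 3) * (4 * π / 3)) := by
  rcases le_or_gt r₁ r₂ with h | h
  · have hsub : {l : EuclideanSpace ℝ (Fin 3) | r₁ ≤ ‖l‖ ∧ ‖l‖ ≤ r₂} ⊆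
        Metric.closedBall 0 r₂ \ Metric.ball 0 r₁ := by
      intro l hl
      exact ⟨mem_closedBall_zero_iff.2 hl.2,
        fun hc => absurd (mem_ball_zero_iff.1 hc) (not_lt.2 hl.1)⟩
    refine (measure_mono hsub).trans ?_
    rw [measure_diff (Metric.ball_subset_closedBall.trans (Metric.closedBall_subset_closedBall h))
      measurableSet_ball.nullMeasurableSet measure_ball_lt_top.ne,
      vol_closedBall3 r₂ (h₁.trans h), vol_ball3 r₁ h₁,
      ← ENNReal.ofReal_sub _ (by positivity)]
    apply ENNReal.ofReal_le_ofReal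
    ring_nf
    exact le_refl _
  · have : {l : EuclideanSpace ℝ (Fin 3) | r₁ ≤ ‖l‖ ∧ ‖l‖ ≤ r₂} = ∅ := by
      ext l; simp only [Set.mem_setOf_eq, Set.mem_empty_iff_false, iff_false, not_and, not_le]
      intro h1; linarith
    rw [this, measure_empty]
    exact zero_le

/-- one-dimensional section estimate -/
lemma sec1d (a b d R c : ℝ) (ha : 0 ≤ a) (hab : a < b) (hb1 : b ≤ 1) (hR1 : 1 ≤ R)
    (h3R : 3 * R ≤ d + 1) (hcR : c ≤ 2 * R ^ 2) :
    volume {v : ℝ | (d + a) ^ 2 ≤ v ^ 2 + c ∧ v ^ 2 + c < (d + b) ^ 2} ≤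
      ENNReal.ofReal (6 * (b - a)) := by
  have hAnn : (0:ℝ) ≤ (d + a) ^ 2 - c := by nlinarith
  have hBnn : (0:ℝ) ≤ (d + b) ^ 2 - c := by nlinarith
  set A := Real.sqrt ((d + a) ^ 2 - c) with hA
  set B := Real.sqrt ((d + b) ^ 2 - c) with hB
  have hAsq : A ^ 2 = (d + a) ^ 2 - c := Real.sq_sqrt hAnn
  have hBsq : B ^ 2 = (d + b) ^ 2 - c := Real.sq_sqrt hBnn
  have hA0 : 0 ≤ A := Real.sqrt_nonneg _
  have hB0 : 0 ≤ B := Real.sqrt_nonneg _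
  have hA2 : ((d + 1) / 3) ^ 2 ≤ (d + a) ^ 2 - c := by nlinarith
  have hAge : (d + 1) / 3 ≤ A := by
    rw [hA, show (d+1)/3 = Real.sqrt (((d+1)/3)^2) from (Real.sqrt_sq (by linarith)).symm]
    exact Real.sqrt_le_sqrt hA2
  have hBA : B ≤ A + 3 * (b - a) := by
    have hstep : (d + b) ^ 2 - c ≤ (A + 3 * (b - a)) ^ 2 := by nlinarith
    calc B ≤ Real.sqrt ((A + 3 * (b - a)) ^ 2) := Real.sqrt_le_sqrt hstep
      _ = A + 3 * (b - a) := Real.sqrt_sq (by nlinarith)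
  have hsubsec : {v : ℝ | (d + a) ^ 2 ≤ v ^ 2 + c ∧ v ^ 2 + c < (d + b) ^ 2} ⊆
      Set.Icc A B ∪ Set.Icc (-B) (-A) := by
    intro v hv
    obtain ⟨h1, h2⟩ := hv
    have hv1 : A ^ 2 ≤ v ^ 2 := by rw [hAsq]; nlinarith
    have hv2 : v ^ 2 ≤ B ^ 2 := by rw [hBsq]; nlinarith
    have habs1 : A ≤ |v| := by
      have h := Real.sqrt_le_sqrt hv1
      rwa [Real.sqrt_sq hA0, Real.sqrt_sq_eq_abs] at h
    have habs2 : |v| ≤ B := by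
      have h := Real.sqrt_le_sqrt hv2
      rwa [Real.sqrt_sq_eq_abs, Real.sqrt_sq hB0] at h
    rcases le_or_gt 0 v with hv0 | hv0
    · exact Or.inl ⟨by rwa [abs_of_nonneg hv0] at habs1, by rwa [abs_of_nonneg hv0] at habs2⟩
    · rw [abs_of_neg hv0] at habs1 habs2
      exact Or.inr ⟨by linarith, by linarith⟩
  calc volume {v : ℝ | (d + a) ^ 2 ≤ v ^ 2 + c ∧ v ^ 2 + c < (d + b) ^ 2}
      ≤ volume (Set.Icc A B ∪ Set.Icc (-B) (-A)) := measure_mono hsubsec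
    _ ≤ volume (Set.Icc A B) + volume (Set.Icc (-B) (-A)) := measure_union_le _ _
    _ = ENNReal.ofReal (B - A) + ENNReal.ofReal (-A - -B) := by
        rw [Real.volume_Icc, Real.volume_Icc]
    _ ≤ ENNReal.ofReal (3 * (b - a)) + ENNReal.ofReal (3 * (b - a)) :=
        add_le_add (ENNReal.ofReal_le_ofReal (by linarith))
          (ENNReal.ofReal_le_ofReal (by linarith))
    _ = ENNReal.ofReal (6 * (b - a)) := by
        rw [← ENNReal.ofReal_add (by linarith) (by linarith)]; ring_nf

/-- the model set in `ℝ × ℝ²` -/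
def Vset (R a b d : ℝ) : Set (ℝ × (Fin 2 → ℝ)) :=
  {q | (d+a)^2 ≤ q.1^2 + q.2 0^2 + q.2 1^2 ∧
    q.1^2 + q.2 0^2 + q.2 1^2 < (d+b)^2 ∧ (q.1 - d)^2 + q.2 0^2 + q.2 1^2 < R^2}

lemma measV (R a b d : ℝ) : MeasurableSet (Vset R a b d) := by
  have m1 : Measurable fun q : ℝ × (Fin 2 → ℝ) => q.1^2 + q.2 0^2 + q.2 1^2 := by fun_prop
  have m2 : Measurable fun q : ℝ × (Fin 2 → ℝ) => (q.1 - d)^2 + q.2 0^2 + q.2 1^2 := by fun_prop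
  exact (measurableSet_le measurable_const m1).inter
    ((measurableSet_lt m1 measurable_const).inter (measurableSet_lt m2 measurable_const))

lemma volV (R a b d : ℝ) (hR1 : 1 ≤ R)
    (ha : 0 ≤ a) (hab : a < b) (hb1 : b ≤ 1) (h3R : 3 * R ≤ d + 1) :
    volume (Vset R a b d) ≤ ENNReal.ofReal (1000 * R ^ 2 * (b - a)) := by
  have hV : MeasurableSet (Vset R a b d) := measV R a b d
  set W : Set (Fin 2 → ℝ) := Set.pi Set.univ (fun _ => Set.Icc (-R) R) with hWdef
  have hW : MeasurableSet W := MeasurableSet.univ_pi fun _ => measurableSet_Icc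
  have key : ∀ w : Fin 2 → ℝ, volume {v : ℝ | (v, w) ∈ Vset R a b d} ≤
      W.indicator (fun _ => ENNReal.ofReal (6 * (b - a))) w := by
    intro w
    by_cases hw : w ∈ W
    · rw [Set.indicator_of_mem hw]
      have hw0 : w 0 ∈ Set.Icc (-R) R := hw 0 (Set.mem_univ _)
      have hw1 : w 1 ∈ Set.Icc (-R) R := hw 1 (Set.mem_univ _)
      have hcR : w 0 ^ 2 + w 1 ^ 2 ≤ 2 * R ^ 2 := by
        nlinarith [sq_le_sq' hw0.1 hw0.2, sq_le_sq' hw1.1 hw1.2]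
      refine (measure_mono ?_).trans
        (sec1d a b d R (w 0 ^ 2 + w 1 ^ 2) ha hab hb1 hR1 h3R hcR)
      intro v hv
      obtain ⟨h1, h2, _⟩ := hv
      exact ⟨show (d+a)^2 ≤ v^2 + (w 0^2 + w 1^2) by linarith,
        show v^2 + (w 0^2 + w 1^2) < (d+b)^2 by linarith⟩
    · rw [Set.indicator_of_notMem hw]
      have hempty : {v : ℝ | (v, w) ∈ Vset R a b d} = ∅ := by
        ext v
        simp only [Vset, Set.mem_setOf_eq, Set.mem_empty_iff_false, iff_false]
        rintro ⟨h1, h2, h3⟩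
        apply hw
        have k0 : w 0 ^ 2 < R ^ 2 := by nlinarith [sq_nonneg (v - d), sq_nonneg (w 1)]
        have k1 : w 1 ^ 2 < R ^ 2 := by nlinarith [sq_nonneg (v - d), sq_nonneg (w 0)]
        have j0 : w 0 ∈ Set.Icc (-R) R := by
          constructor <;>
            nlinarith [le_abs_self (w 0), neg_abs_le (w 0), sq_abs (w 0), abs_nonneg (w 0)]
        have j1 : w 1 ∈ Set.Icc (-R) R := by
          constructor <;>
            nlinarith [le_abs_self (w 1), neg_abs_le (w 1), sq_abs (w 1), abs_nonneg (w 1)]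
        intro i _
        fin_cases i
        · exact j0
        · exact j1
      rw [hempty, measure_empty]
  have hWvol : volume W = ENNReal.ofReal (2 * R) ^ 2 := by
    rw [hWdef, volume_pi_pi, Real.volume_Icc]
    simp only [Finset.prod_const, Finset.card_univ, Fintype.card_fin]
    rw [two_mul]
    norm_num
  calc volume (Vset R a b d)
      = ∫⁻ w, volume {v : ℝ | (v, w) ∈ Vset R a b d} ∂volume := by
        rw [Measure.volume_eq_prod, Measure.prod_apply_symm hV]; rfl
    _ ≤ ∫⁻ w, W.indicator (fun _ => ENNReal.ofReal (6 * (b - a))) w ∂volume :=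
        lintegral_mono key
    _ = ENNReal.ofReal (6 * (b - a)) * volume W := lintegral_indicator_const hW _
    _ ≤ ENNReal.ofReal (1000 * R ^ 2 * (b - a)) := by
        rw [hWvol, ← ENNReal.ofReal_pow (by linarith), ← ENNReal.ofReal_mul (by linarith)]
        apply ENNReal.ofReal_le_ofReal
        have hRR : (0:ℝ) ≤ R ^ 2 * (b - a) := mul_nonneg (by positivity) (by linarith)
        nlinarith [hRR]

/-- the section volume bound -/
lemma section_bound (kF R a b : ℝ) (hkF : 1 ≤ kF) (hR1 : 1 ≤ R) (hRkF : R ≤ kF)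
    (ha : 0 ≤ a) (hab : a < b) (hb1 : b ≤ 1) (k : EuclideanSpace ℝ (Fin 3))
    (hk1 : kF - b ≤ ‖k‖) (hk2 : ‖k‖ ≤ kF) :
    volume {l : EuclideanSpace ℝ (Fin 3) |
        kF ≤ ‖l‖ ∧ ‖k - l‖ < R ∧ a ≤ ‖l‖ - ‖k‖ ∧ ‖l‖ - ‖k‖ < b}
      ≤ ENNReal.ofReal (1000 * R ^ 2 * (b - a)) := by
  set d := ‖k‖ with hd
  have hd0 : (0:ℝ) ≤ d := norm_nonneg k
  rcases le_or_gt kF (3 * R) with hcase | hcase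
  · -- R is comparable to kF : use a crude annulus bound
    set r₁ := max kF (d + a) with hr₁
    have hsub : {l : EuclideanSpace ℝ (Fin 3) |
        kF ≤ ‖l‖ ∧ ‖k - l‖ < R ∧ a ≤ ‖l‖ - ‖k‖ ∧ ‖l‖ - ‖k‖ < b} ⊆
        {l : EuclideanSpace ℝ (Fin 3) | r₁ ≤ ‖l‖ ∧ ‖l‖ ≤ d + b} := by
      intro l hl
      obtain ⟨h1, _, h3, h4⟩ := hl
      exact ⟨max_le h1 (by linarith), by linarith⟩
    refine (measure_mono hsub).trans
      ((annulus_vol r₁ (d + b) (le_max_of_le_left (by linarith))).trans ?_)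
    apply ENNReal.ofReal_le_ofReal
    have h1 : d + a ≤ r₁ := le_max_right _ _
    have h2 : (0:ℝ) ≤ d + a := by linarith
    have h3 : (d + a) ^ 3 ≤ r₁ ^ 3 := pow_le_pow_left₀ h2 h1 3
    have h4 : d + b ≤ 4 * R := by linarith
    have h5 : (0:ℝ) ≤ d + b := by linarith
    have ha2 : d + a ≤ d + b := by linarith
    have hbb : (d + b) ^ 2 ≤ 16 * R ^ 2 := by nlinarith
    have key : (d + b) ^ 3 - (d + a) ^ 3 ≤ 48 * R ^ 2 * (b - a) := by
      nlinarith [mul_nonneg (mul_nonneg (sub_nonneg.2 hab.le) (sub_nonneg.2 ha2))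
          (by linarith : (0:ℝ) ≤ 2 * (d + b) + (d + a)),
        mul_nonneg (sub_nonneg.2 hab.le) (sub_nonneg.2 hbb)]
    have hπ : 4 * π / 3 ≤ 6 := by nlinarith [Real.pi_le_four]
    calc ((d + b) ^ 3 - r₁ ^ 3) * (4 * π / 3)
        ≤ (48 * R ^ 2 * (b - a)) * (4 * π / 3) := by
          apply mul_le_mul_of_nonneg_right (by linarith) (by positivity)
      _ ≤ (48 * R ^ 2 * (b - a)) * 6 := by
          apply mul_le_mul_of_nonneg_left hπ
            (mul_nonneg (by positivity) (sub_nonneg.2 hab.le))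
      _ ≤ 1000 * R ^ 2 * (b - a) := by
          nlinarith [mul_nonneg (by positivity : (0:ℝ) ≤ R^2) (sub_nonneg.2 hab.le)]
  · -- R is small compared to kF : reduce to the slab estimate
    have h3R : 3 * R ≤ d + 1 := by linarith
    have hd2 : (2:ℝ) ≤ d := by linarith
    set w₀ : EuclideanSpace ℝ (Fin 3) :=
      (d : ℝ) • (EuclideanSpace.single (0 : Fin 3) (1:ℝ)) with hw₀
    have hnw₀ : ‖w₀‖ = d := by
      rw [hw₀, norm_smul, EuclideanSpace.norm_single]
      simp [abs_of_nonneg hd0]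
    have hkw : ‖k‖ = ‖w₀‖ := by rw [hnw₀]
    set f := Submodule.reflection (ℝ ∙ (k - w₀))ᗮ with hf
    have hfk : f k = w₀ := Submodule.reflection_sub hkw
    set U' : Set (EuclideanSpace ℝ (Fin 3)) :=
      {x | d + a ≤ ‖x‖ ∧ ‖x‖ < d + b ∧ ‖x - w₀‖ < R} with hU'def
    have hU' : MeasurableSet U' := by
      apply MeasurableSet.inter
      · exact (isClosed_le continuous_const continuous_norm).measurableSet
      · apply MeasurableSet.inter
        · exact (isOpen_lt continuous_norm continuous_const).measurableSet
        · exact (isOpen_lt ((continuous_id.sub continuous_const).norm)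
            continuous_const).measurableSet
    have hsub1 : {l : EuclideanSpace ℝ (Fin 3) |
        kF ≤ ‖l‖ ∧ ‖k - l‖ < R ∧ a ≤ ‖l‖ - ‖k‖ ∧ ‖l‖ - ‖k‖ < b} ⊆ ⇑f ⁻¹' U' := by
      intro l hl
      obtain ⟨h1, h2, h3, h4⟩ := hl
      have e1 : ‖f l‖ = ‖l‖ := f.norm_map l
      have e2 : ‖f l - w₀‖ = ‖k - l‖ := by
        rw [← hfk, ← map_sub, f.norm_map, norm_sub_rev]
      exact ⟨by rw [e1]; linarith, by rw [e1]; linarith, by rw [e2]; exact h2⟩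
    refine (measure_mono hsub1).trans ?_
    rw [f.measurePreserving.measure_preimage hU'.nullMeasurableSet]
    -- move to coordinates
    set U : Set (Fin 3 → ℝ) := {y | (d+a)^2 ≤ y 0^2 + y 1^2 + y 2^2 ∧
      y 0^2 + y 1^2 + y 2^2 < (d+b)^2 ∧ (y 0 - d)^2 + y 1^2 + y 2^2 < R^2} with hUdef
    have hU : MeasurableSet U := by
      have m1 : Measurable fun y : Fin 3 → ℝ => y 0^2 + y 1^2 + y 2^2 := by fun_prop
      have m2 : Measurable fun y : Fin 3 → ℝ => (y 0 - d)^2 + y 1^2 + y 2^2 := by fun_prop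
      exact (measurableSet_le measurable_const m1).inter
        ((measurableSet_lt m1 measurable_const).inter (measurableSet_lt m2 measurable_const))
    have hda : (0:ℝ) ≤ d + a := by linarith
    have hsub2 : U' ⊆ ⇑(MeasurableEquiv.toLp 2 (Fin 3 → ℝ)).symm ⁻¹' U := by
      intro x hx
      obtain ⟨h1, h2, h3⟩ := hx
      have hnx : ‖x‖^2 = x 0^2 + x 1^2 + x 2^2 := by
        rw [EuclideanSpace.norm_eq, Real.sq_sqrt (by positivity)]
        simp [Fin.sum_univ_three, sq_abs]
      have hxw : ‖x - w₀‖^2 = (x 0 - d)^2 + x 1^2 + x 2^2 := by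
        rw [EuclideanSpace.norm_eq, Real.sq_sqrt (by positivity)]
        simp [Fin.sum_univ_three, sq_abs, hw₀, EuclideanSpace.single_apply]
      have m1 : (d+a)^2 ≤ ‖x‖^2 := pow_le_pow_left₀ hda h1 2
      have m2 : ‖x‖^2 < (d+b)^2 := by
        apply pow_lt_pow_left₀ h2 (norm_nonneg x) (by norm_num)
      have m3 : ‖x - w₀‖^2 < R^2 := by
        apply pow_lt_pow_left₀ h3 (norm_nonneg _) (by norm_num)
      simp only [Set.mem_preimage, MeasurableEquiv.toLp_symm_apply, hUdef, Set.mem_setOf_eq]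
      rw [hnx] at m1 m2
      rw [hxw] at m3
      exact ⟨m1, m2, m3⟩
    refine ((measure_mono hsub2).trans ?_)
    rw [(EuclideanSpace.volume_preserving_symm_measurableEquiv_toLp (Fin 3)).measure_preimage
      hU.nullMeasurableSet]
    have hsub3 : U ⊆ ⇑(MeasurableEquiv.piFinSuccAbove (fun _ : Fin 3 => ℝ) 0) ⁻¹'
        Vset R a b d := by
      intro y hy
      simp only [Set.mem_preimage, MeasurableEquiv.piFinSuccAbove_apply, Vset,
        Set.mem_setOf_eq]
      exact hy
    refine ((measure_mono hsub3).trans ?_)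
    rw [(volume_preserving_piFinSuccAbove (fun _ : Fin 3 => ℝ) 0).measure_preimage
      (measV R a b d).nullMeasurableSet]
    exact volV R a b d hR1 ha hab hb1 h3R

end ShellVolAux

open ShellVolAux in
/-- The three-dimensional shell-volume estimate of Appendix C: for `k_F ≥ 1`, `1 ≤ R ≤ k_F`
and `0 ≤ a < b ≤ 1`, the set of pairs `(k,l)` with `k` inside and `l` outside the Fermi ball
of radius `k_F`, momentum transfer `|k−l| < R` and radial gap `a ≤ |l|−|k| < b` has
Lebesgue measure at most `C · k_F² · R² · b · (b−a)`. -/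
theorem shell_volume_three_dim :
    ∃ C : ℝ, 0 < C ∧ ∀ kF : ℝ, 1 ≤ kF → ∀ R : ℝ, 1 ≤ R → R ≤ kF →
      ∀ a b : ℝ, 0 ≤ a → a < b → b ≤ 1 →
      volume {p : EuclideanSpace ℝ (Fin 3) × EuclideanSpace ℝ (Fin 3) |
          ‖p.1‖ ≤ kF ∧ kF ≤ ‖p.2‖ ∧ ‖p.1 - p.2‖ < R ∧
          a ≤ ‖p.2‖ - ‖p.1‖ ∧ ‖p.2‖ - ‖p.1‖ < b}
        ≤ ENNReal.ofReal (C * kF ^ 2 * R ^ 2 * b * (b - a)) := by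
  refine ⟨16000, by norm_num, ?_⟩
  intro kF hkF R hR1 hRkF a b ha hab hb1
  set S : Set (EuclideanSpace ℝ (Fin 3) × EuclideanSpace ℝ (Fin 3)) :=
    {p | ‖p.1‖ ≤ kF ∧ kF ≤ ‖p.2‖ ∧ ‖p.1 - p.2‖ < R ∧
      a ≤ ‖p.2‖ - ‖p.1‖ ∧ ‖p.2‖ - ‖p.1‖ < b} with hSdef
  have hS : MeasurableSet S := by
    apply MeasurableSet.inter
    · exact (isClosed_le (continuous_norm.comp continuous_fst) continuous_const).measurableSet
    apply MeasurableSet.inter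
    · exact (isClosed_le continuous_const (continuous_norm.comp continuous_snd)).measurableSet
    apply MeasurableSet.inter
    · exact (isOpen_lt ((continuous_fst.sub continuous_snd).norm) continuous_const).measurableSet
    apply MeasurableSet.inter
    · exact (isClosed_le continuous_const
        ((continuous_norm.comp continuous_snd).sub (continuous_norm.comp continuous_fst))).measurableSet
    · exact (isOpen_lt
        ((continuous_norm.comp continuous_snd).sub (continuous_norm.comp continuous_fst))
        continuous_const).measurableSet
  set K : Set (EuclideanSpace ℝ (Fin 3)) := {k | kF - b ≤ ‖k‖ ∧ ‖k‖ ≤ kF} with hKdef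
  have hK : MeasurableSet K :=
    (isClosed_le continuous_const continuous_norm).measurableSet.inter
      (isClosed_le continuous_norm continuous_const).measurableSet
  have hpt : ∀ k : EuclideanSpace ℝ (Fin 3), volume (Prod.mk k ⁻¹' S) ≤
      K.indicator (fun _ => ENNReal.ofReal (1000 * R ^ 2 * (b - a))) k := by
    intro k
    by_cases hk : k ∈ K
    · rw [Set.indicator_of_mem hk]
      refine (measure_mono ?_).trans
        (section_bound kF R a b hkF hR1 hRkF ha hab hb1 k hk.1 hk.2)
      intro l hl
      exact hl.2
    · rw [Set.indicator_of_notMem hk]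
      have : Prod.mk k ⁻¹' S = ∅ := by
        ext l
        simp only [Set.mem_preimage, hSdef, Set.mem_setOf_eq, Set.mem_empty_iff_false, iff_false]
        rintro ⟨h1, h2, h3, h4, h5⟩
        exact hk ⟨by linarith, h1⟩
      rw [this, measure_empty]
  have hKvol : volume K ≤ ENNReal.ofReal (16 * kF ^ 2 * b) := by
    refine (annulus_vol (kF - b) kF (by linarith)).trans (ENNReal.ofReal_le_ofReal ?_)
    have h1 : (0:ℝ) ≤ kF - b := by linarith
    have hb0 : (0:ℝ) ≤ b := by linarith
    have hπ : 4 * π / 3 ≤ 16 / 3 := by nlinarith [Real.pi_le_four]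
    have hkey : kF ^ 3 - (kF - b) ^ 3 ≤ 3 * kF ^ 2 * b := by
      nlinarith [mul_nonneg (mul_nonneg hb0 hb0) (by linarith : (0:ℝ) ≤ 3 * kF - b)]
    have hcube : (kF - b) ^ 3 ≤ kF ^ 3 := pow_le_pow_left₀ h1 (by linarith) 3
    have h0 : (0:ℝ) ≤ kF ^ 3 - (kF - b) ^ 3 := by linarith
    calc (kF ^ 3 - (kF - b) ^ 3) * (4 * π / 3)
        ≤ (3 * kF ^ 2 * b) * (16 / 3) := by
          apply mul_le_mul hkey hπ (by positivity) (mul_nonneg (by positivity) hb0)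
      _ = 16 * kF ^ 2 * b := by ring
  calc volume S = ∫⁻ k, volume (Prod.mk k ⁻¹' S) ∂volume := by
        rw [Measure.volume_eq_prod, Measure.prod_apply hS]
    _ ≤ ∫⁻ k, K.indicator (fun _ => ENNReal.ofReal (1000 * R ^ 2 * (b - a))) k ∂volume :=
        lintegral_mono hpt
    _ = ENNReal.ofReal (1000 * R ^ 2 * (b - a)) * volume K := lintegral_indicator_const hK _
    _ ≤ ENNReal.ofReal (1000 * R ^ 2 * (b - a)) * ENNReal.ofReal (16 * kF ^ 2 * b) :=
        mul_le_mul_right hKvol _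
    _ ≤ ENNReal.ofReal (16000 * kF ^ 2 * R ^ 2 * b * (b - a)) := by
        rw [← ENNReal.ofReal_mul (mul_nonneg (by positivity) (by linarith : (0:ℝ) ≤ b - a))]
        exact ENNReal.ofReal_le_ofReal (le_of_eq (by ring))
end
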